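/- For any connected graph G and any n ≥ 2, pd(G × K_{1,n}) ≤ pd(G) + n − 1, where K_{1,n} is the star with n leaves. -/

import Mathlib

open SimpleGraph

/-- Distance from a vertex to a set of vertices: `min {d(v,x) : x ∈ P}`. -/
noncomputable def distToSet {V : Type*} (G : SimpleGraph V) (v : V) (P : Set V) : ℕ :=
  sInf ((G.dist v) '' P)

/-- `S` is a resolving set of `G`. -/
def IsResolvingSet {V : Type*} (G : SimpleGraph V) (S : Set V) : Prop :=
  ∀ u v : V, u ≠ v → ∃ w ∈ S, G.dist u w ≠ G.dist v w

/-- The metric dimension of `G`. -/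
noncomputable def metricDim {V : Type*} (G : SimpleGraph V) : ℕ :=
  sInf {n | ∃ S : Finset V, S.card = n ∧ IsResolvingSet G ↑S}

/-- `Π` is a resolving partition of `G`: a partition of the vertex set such that
distinct vertices have distinct vectors of distances to the parts. -/
def IsResolvingPartition {V : Type*} (G : SimpleGraph V) (Pi : Set (Set V)) : Prop :=
  Setoid.IsPartition Pi ∧
    ∀ u v : V, u ≠ v → ∃ P ∈ Pi, distToSet G u P ≠ distToSet G v P

/-- The partition dimension of `G`. -/
noncomputable def partitionDim {V : Type*} (G : SimpleGraph V) : ℕ :=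
  sInf {n | ∃ Pi : Finset (Set V), Pi.card = n ∧ IsResolvingPartition G ↑Pi}

/-! If `Π` is a resolving partition of `G` and `W` is a resolving set of `H` missing some vertex,
then the blocks `A × (V(H) \ W)` for `A ∈ Π` together with the layers `V(G) × {w}` for `w ∈ W`
partition `G □ H`. Distances in `G □ H` add coordinatewise, so the layers separate vertices with
different `H`-coordinates, while the blocks `A × (V(H) \ W)` separate vertices with the same
`H`-coordinate exactly as `A` does in `G`. Hence `pd(G □ H) ≤ pd(G) + |W|`. In the star `K_{1,n}`,
all leaves but one form a resolving set of size `n - 1`: the only pair of vertices outside it, the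
center and the remaining leaf, is separated by any other leaf, adjacent to the center only. -/

namespace SimpleGraph

variable {α β : Type*} {G : SimpleGraph α} {H : SimpleGraph β}

lemma dist_boxProd (hG : G.Preconnected) (hH : H.Preconnected) (x y : α × β) :
    (G □ H).dist x y = G.dist x.1 y.1 + H.dist x.2 y.2 := by
  rw [dist, dist, dist, edist_boxProd]
  exact ENat.toNat_add (edist_ne_top_iff_reachable.mpr (hG _ _))
    (edist_ne_top_iff_reachable.mpr (hH _ _))

lemma completeBipartiteGraph_preconnected {U L : Type*} [Nonempty U] [Nonempty L] :
    (completeBipartiteGraph U L).Preconnected := by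
  obtain ⟨u⟩ := ‹Nonempty U›
  obtain ⟨ℓ⟩ := ‹Nonempty L›
  have hc : ∀ x, (completeBipartiteGraph U L).Reachable x (.inr ℓ) := by
    rintro (u' | ℓ')
    · exact Adj.reachable (by simp [completeBipartiteGraph])
    · have h₁ : (completeBipartiteGraph U L).Adj (.inr ℓ') (.inl u) := by simp
      have h₂ : (completeBipartiteGraph U L).Adj (.inl u) (.inr ℓ) := by simp
      exact h₁.reachable.trans h₂.reachable
  exact fun x y => (hc x).trans (hc y).symm

end SimpleGraph

open SimpleGraph

section

variable {α β : Type*} {G : SimpleGraph α} {H : SimpleGraph β}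

lemma distToSet_le_dist {u v : α} {A : Set α} (hv : v ∈ A) : distToSet G u A ≤ G.dist u v :=
  Nat.sInf_le ⟨v, hv, rfl⟩

lemma distToSet_singleton (u v : α) : distToSet G u {v} = G.dist u v := by
  simp [distToSet]

lemma distToSet_univ (u : α) : distToSet G u Set.univ = 0 :=
  Nat.eq_zero_of_le_zero (distToSet_le_dist (Set.mem_univ u) |>.trans_eq dist_self)

lemma distToSet_boxProd_prod (hG : G.Preconnected) (hH : H.Preconnected) (u : α) (b : β)
    {A : Set α} {B : Set β} (hA : A.Nonempty) (hB : B.Nonempty) :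
    distToSet (G □ H) (u, b) (A ×ˢ B) = distToSet G u A + distToSet H b B := by
  refine le_antisymm ?_ ?_
  · obtain ⟨v, hv, hvd⟩ := Nat.sInf_mem (hA.image (G.dist u))
    obtain ⟨c, hc, hcd⟩ := Nat.sInf_mem (hB.image (H.dist b))
    calc distToSet (G □ H) (u, b) (A ×ˢ B) ≤ (G □ H).dist (u, b) (v, c) :=
          distToSet_le_dist (Set.mk_mem_prod hv hc)
      _ = distToSet G u A + distToSet H b B := by
          rw [dist_boxProd hG hH, distToSet, distToSet, hvd, hcd]
  · refine le_csInf ((hA.prod hB).image _) ?_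
    rintro _ ⟨⟨v, c⟩, ⟨hv, hc⟩, rfl⟩
    rw [dist_boxProd hG hH]
    exact add_le_add (distToSet_le_dist hv) (distToSet_le_dist hc)

lemma isResolvingSet_of_forall_notMem {W : Set β} (hH : H.Preconnected)
    (h : ∀ a b, a ∉ W → b ∉ W → a ≠ b → ∃ w ∈ W, H.dist a w ≠ H.dist b w) :
    IsResolvingSet H W := by
  intro a b hab
  by_cases ha : a ∈ W
  · exact ⟨a, ha, by rw [dist_self]; exact ((hH b a).pos_dist_of_ne hab.symm).ne⟩
  by_cases hb : b ∈ W
  · exact ⟨b, hb, by rw [dist_self]; exact ((hH a b).pos_dist_of_ne hab).ne'⟩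
  exact h a b ha hb hab

lemma isResolvingPartition_range_singleton (hG : G.Preconnected) :
    IsResolvingPartition G (Set.range fun v : α => {v}) := by
  refine ⟨⟨fun ⟨v, hv⟩ => Set.singleton_ne_empty v hv, fun v => ⟨{v}, ⟨⟨v, rfl⟩, rfl⟩, ?_⟩⟩, ?_⟩
  · rintro _ ⟨⟨w, rfl⟩, hv⟩
    rw [Set.mem_singleton_iff.mp hv]
  · intro u v huv
    refine ⟨{u}, ⟨u, rfl⟩, ?_⟩
    rw [distToSet_singleton, distToSet_singleton, dist_self]
    exact ((hG v u).pos_dist_of_ne huv.symm).ne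

lemma partitionDim_le_card {Pi : Finset (Set α)} (h : IsResolvingPartition G ↑Pi) :
    partitionDim G ≤ Pi.card :=
  Nat.sInf_le ⟨Pi, rfl, h⟩

lemma exists_isResolvingPartition_card_eq_partitionDim [Fintype α] (hG : G.Preconnected) :
    ∃ Pi : Finset (Set α), Pi.card = partitionDim G ∧ IsResolvingPartition G ↑Pi := by
  classical
  have hne : {n | ∃ Pi : Finset (Set α), Pi.card = n ∧ IsResolvingPartition G ↑Pi}.Nonempty :=
    ⟨_, Finset.univ.image (fun v => {v}), rfl,
      by simpa using isResolvingPartition_range_singleton hG⟩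
  exact Nat.sInf_mem hne

lemma Setoid.IsPartition.prod_compl_union_univ_prod [Nonempty α] {Pi : Set (Set α)}
    (hPi : Setoid.IsPartition Pi) {W : Set β} (hW : Wᶜ.Nonempty) :
    Setoid.IsPartition ((· ×ˢ Wᶜ) '' Pi ∪ (fun w => Set.univ ×ˢ {w}) '' W) := by
  refine ⟨?_, fun ⟨v, b⟩ => ?_⟩
  · rintro (⟨A, hA, hAe⟩ | ⟨w, -, hwe⟩)
    · exact ((Setoid.nonempty_of_mem_partition hPi hA).prod hW).ne_empty hAe
    · exact (Set.univ_nonempty.prod (Set.singleton_nonempty w)).ne_empty hwe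
  by_cases hb : b ∈ W
  · refine ⟨Set.univ ×ˢ {b}, ⟨Or.inr ⟨b, hb, rfl⟩, by simp⟩, ?_⟩
    rintro _ ⟨⟨A, -, rfl⟩ | ⟨w, -, rfl⟩, hvb⟩
    · exact absurd hb hvb.2
    · obtain ⟨-, rfl : b = w⟩ := hvb
      rfl
  · obtain ⟨A, ⟨hA, hvA⟩, hAuniq⟩ := hPi.2 v
    refine ⟨A ×ˢ Wᶜ, ⟨Or.inl ⟨A, hA, rfl⟩, hvA, hb⟩, ?_⟩
    rintro _ ⟨⟨A', hA', rfl⟩ | ⟨w, hw, rfl⟩, hvb⟩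
    · rw [hAuniq A' ⟨hA', hvb.1⟩]
    · obtain ⟨-, rfl : b = w⟩ := hvb
      exact absurd hw hb

lemma IsResolvingPartition.boxProd (hG : G.Connected) (hH : H.Preconnected) {Pi : Set (Set α)}
    (hPi : IsResolvingPartition G Pi) {W : Set β} (hW : IsResolvingSet H W) (hWc : Wᶜ.Nonempty) :
    IsResolvingPartition (G □ H) ((· ×ˢ Wᶜ) '' Pi ∪ (fun w => Set.univ ×ˢ {w}) '' W) := by
  have := hG.nonempty
  refine ⟨hPi.1.prod_compl_union_univ_prod hWc, ?_⟩
  rintro ⟨u, a⟩ ⟨v, b⟩ huv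
  by_cases hab : a = b
  · subst hab
    obtain ⟨A, hA, hd⟩ := hPi.2 u v fun h => huv (h ▸ rfl)
    have hAne := Setoid.nonempty_of_mem_partition hPi.1 hA
    refine ⟨A ×ˢ Wᶜ, Or.inl ⟨A, hA, rfl⟩, ?_⟩
    rwa [distToSet_boxProd_prod hG.preconnected hH _ _ hAne hWc,
      distToSet_boxProd_prod hG.preconnected hH _ _ hAne hWc, Ne, Nat.add_right_cancel_iff]
  · obtain ⟨w, hw, hd⟩ := hW a b hab
    refine ⟨Set.univ ×ˢ {w}, Or.inr ⟨w, hw, rfl⟩, ?_⟩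
    simpa [distToSet_boxProd_prod hG.preconnected hH, distToSet_univ, distToSet_singleton]
      using hd

theorem partitionDim_boxProd_le [Fintype α] (hG : G.Connected) (hH : H.Preconnected)
    {W : Finset β} (hW : IsResolvingSet H ↑W) (hWc : ∃ b, b ∉ W) :
    partitionDim (G □ H) ≤ partitionDim G + W.card := by
  classical
  obtain ⟨Pi, hcard, hPi⟩ := exists_isResolvingPartition_card_eq_partitionDim hG.preconnected
  let Pi' := Pi.image (· ×ˢ (↑W : Set β)ᶜ) ∪ W.image fun w => Set.univ ×ˢ {w}
  have hPi' : IsResolvingPartition (G □ H) ↑Pi' := by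
    simpa [Pi'] using hPi.boxProd hG hH hW hWc
  calc partitionDim (G □ H) ≤ Pi'.card := partitionDim_le_card hPi'
    _ ≤ Pi.card + W.card :=
        (Finset.card_union_le _ _).trans (add_le_add Finset.card_image_le Finset.card_image_le)
    _ = partitionDim G + W.card := by rw [hcard]

end

section Star

variable {C L : Type*} [Unique C] [Fintype L] [DecidableEq L]

lemma isResolvingSet_star {ℓ₀ ℓ₁ : L} (h : ℓ₁ ≠ ℓ₀) :
    IsResolvingSet (completeBipartiteGraph C L)
      ↑((Finset.univ.erase ℓ₀).map (Function.Embedding.inr : L ↪ C ⊕ L)) := by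
  have : Nonempty L := ⟨ℓ₀⟩
  have hℓ₁ : (Sum.inr ℓ₁ : C ⊕ L) ∈ (Finset.univ.erase ℓ₀).map Function.Embedding.inr := by
    simp [h]
  have hsep (c : C) : (completeBipartiteGraph C L).dist (.inl c) (.inr ℓ₁) ≠
      (completeBipartiteGraph C L).dist (.inr ℓ₀) (.inr ℓ₁) := by
    rw [dist_eq_one_iff_adj.mpr (by simp [completeBipartiteGraph]), ne_comm, Ne,
      dist_eq_one_iff_adj]
    simp [completeBipartiteGraph]
  refine isResolvingSet_of_forall_notMem completeBipartiteGraph_preconnected ?_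
  rintro (c | ℓ) (c' | ℓ') ha hb hab <;> simp at ha hb <;> subst_vars
  · exact absurd (congrArg Sum.inl (Subsingleton.elim c c')) hab
  · exact ⟨_, hℓ₁, hsep c⟩
  · exact ⟨_, hℓ₁, (hsep c').symm⟩
  · exact absurd rfl hab

end Star

theorem stmt_11 {V : Type*} [Fintype V] (G : SimpleGraph V) (hG : G.Connected)
    (n : ℕ) (hn : 2 ≤ n) :
    partitionDim (G.boxProd (completeBipartiteGraph (Fin 1) (Fin n))) ≤
      partitionDim G + (n - 1) := by
  let ℓ₀ : Fin n := ⟨0, by omega⟩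
  have hW := isResolvingSet_star (C := Fin 1) (ℓ₀ := ℓ₀) (ℓ₁ := ⟨1, hn⟩) (by simp [ℓ₀])
  have : Nonempty (Fin n) := ⟨ℓ₀⟩
  simpa [Finset.card_erase_of_mem] using
    partitionDim_boxProd_le hG completeBipartiteGraph_preconnected hW ⟨.inl 0, by simp⟩
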